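/- (Strong Maximum Principle, possibly sign-changing zeroth order coefficient.) Let Ω ⊂ ℝⁿ be open and connected, let c : Ω → ℝ be continuous, and let u ∈ C²(Ω) satisfy Δu(x) + c(x)u(x) ≥ 0 and u(x) ≤ 0 for all x ∈ Ω. If u(x₀) = 0 for some x₀ ∈ Ω, then u ≡ 0 in Ω. -/

import Mathlib

/-!
Since `u ≤ 0`, the inequality survives replacing `c` by `min c 0`, so we may assume `c ≤ 0`.
The zero set of `u` is relatively closed in `Ω`. If it were not open, some ball `B(y, ρ) ⊆ Ω`
on which `u < 0` would touch it at a point `x₁` of the sphere `|x - y| = ρ`. Hopf's lemma gives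
`u` a positive outward derivative at `x₁`, while `x₁` is an interior maximum of `u`, where the
derivative vanishes. So the zero set is open and closed in the connected set `Ω`.

Hopf's lemma uses the barrier `w(x) = exp(-α|x - y|²)`: for large `α`, `Δw + cw > 0` on the
annulus `ρ/2 ≤ |x - y| ≤ ρ`, so for small `δ > 0` the weak maximum principle for strict
subsolutions puts the maximum of `u + δw` over the annulus at `x₁`. The inward derivative of
`u + δw` at `x₁` is then `≤ 0`, while that of `w` is positive.
-/

open Metric Set

/-- The Laplacian `Δu(x) = ∑ ∂²u/∂xᵢ²` of a function on Euclidean space. -/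
noncomputable def lapl {n : ℕ} (u : EuclideanSpace ℝ (Fin n) → ℝ)
    (x : EuclideanSpace ℝ (Fin n)) : ℝ :=
  ∑ i : Fin n,
    iteratedFDeriv ℝ 2 u x ![EuclideanSpace.single i 1, EuclideanSpace.single i 1]

open Filter Topology Laplacian
open scoped RealInnerProductSpace

theorem IsLocalMax.deriv_deriv_nonpos {g : ℝ → ℝ} {t : ℝ} (h : IsLocalMax g t)
    (hg : ContinuousAt g t) : deriv (deriv g) t ≤ 0 := by
  by_contra! hpos
  have hconst : g =ᶠ[𝓝 t] fun _ => g t :=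
    (h.and (isLocalMin_of_deriv_deriv_pos hpos h.deriv_eq_zero hg)).mono
      fun s hs => le_antisymm hs.1 hs.2
  simp [hconst.deriv.deriv_eq] at hpos

section Line

variable {E F : Type*} [NormedAddCommGroup E] [NormedSpace ℝ E]
  [NormedAddCommGroup F] [NormedSpace ℝ F]

theorem hasDerivAt_comp_line {f : E → F} {p v : E} {t : ℝ}
    (hf : DifferentiableAt ℝ f (p + t • v)) :
    HasDerivAt (fun s : ℝ => f (p + s • v)) (fderiv ℝ f (p + t • v) v) t :=
  hf.hasFDerivAt.comp_hasDerivAt t (((hasDerivAt_id t).smul_const v).const_add p |>.congr_deriv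
    (one_smul ℝ v))

theorem deriv_deriv_comp_line {f : E → F} {p : E} (hf : ContDiffAt ℝ 2 f p) (v : E) :
    deriv (deriv fun t : ℝ => f (p + t • v)) 0 = fderiv ℝ (fderiv ℝ f) p v v := by
  have hline : Tendsto (fun t : ℝ => p + t • v) (𝓝 0) (𝓝 p) :=
    (by fun_prop : Continuous fun t : ℝ => p + t • v).tendsto' 0 p (by simp)
  have hderiv : deriv (fun t : ℝ => f (p + t • v)) =ᶠ[𝓝 0] fun t => fderiv ℝ f (p + t • v) v := by
    filter_upwards [hline.eventually (hf.eventually (by simp))] with t ht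
    exact (hasDerivAt_comp_line (ht.differentiableAt (by simp))).deriv
  have hf' : DifferentiableAt ℝ (fderiv ℝ f) (p + (0 : ℝ) • v) := by
    simpa using (hf.fderiv_right (m := 1) (by norm_num)).differentiableAt (by simp)
  rw [hderiv.deriv_eq, ((hasDerivAt_comp_line hf').clm_apply (hasDerivAt_const 0 v)).deriv]
  simp

theorem IsLocalMax.fderiv_fderiv_apply_self_nonpos {f : E → ℝ} {p : E} (h : IsLocalMax f p)
    (hf : ContDiffAt ℝ 2 f p) (v : E) : fderiv ℝ (fderiv ℝ f) p v v ≤ 0 := by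
  rw [← deriv_deriv_comp_line hf]
  have hline : ContinuousAt (fun t : ℝ => p + t • v) 0 := by fun_prop
  refine IsLocalMax.deriv_deriv_nonpos ?_ ?_
  · exact IsLocalMax.comp_continuous (g := fun t : ℝ => p + t • v) (by simpa using h) hline
  · exact ContinuousAt.comp (g := f) (by simpa using hf.continuousAt) hline

end Line

section Laplacian

variable {E : Type*} [NormedAddCommGroup E] [InnerProductSpace ℝ E] [FiniteDimensional ℝ E]

theorem laplacian_eq_sum_fderiv_fderiv {ι : Type*} [Fintype ι] (b : OrthonormalBasis ι ℝ E)
    (f : E → ℝ) (x : E) : Δ f x = ∑ i, fderiv ℝ (fderiv ℝ f) x (b i) (b i) := by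
  simp [InnerProductSpace.laplacian_eq_iteratedFDeriv_orthonormalBasis f b,
    iteratedFDeriv_two_apply]

theorem IsLocalMax.laplacian_nonpos {f : E → ℝ} {p : E} (h : IsLocalMax f p)
    (hf : ContDiffAt ℝ 2 f p) : Δ f p ≤ 0 := by
  rw [laplacian_eq_sum_fderiv_fderiv (stdOrthonormalBasis ℝ E)]
  exact Finset.sum_nonpos fun i _ => h.fderiv_fderiv_apply_self_nonpos hf _

theorem IsCompact.forall_le_of_strictSubsolution {K U : Set E} {v c : E → ℝ} {M : ℝ}
    (hK : IsCompact K) (hU : IsOpen U) (hUK : U ⊆ K) (hv : ContinuousOn v K)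
    (hv₂ : ∀ x ∈ U, ContDiffAt ℝ 2 v x) (hc : ∀ x ∈ U, c x ≤ 0)
    (hstrict : ∀ x ∈ U, 0 < Δ v x + c x * v x) (hM : 0 ≤ M) (hbdry : ∀ x ∈ K \ U, v x ≤ M) :
    ∀ x ∈ K, v x ≤ M := by
  rcases K.eq_empty_or_nonempty with rfl | hne
  · simp
  obtain ⟨p, hpK, hpmax⟩ := hK.exists_isMaxOn hne hv
  suffices v p ≤ M from fun x hx => (hpmax hx).trans this
  by_contra! hlt
  have hpU : p ∈ U := by_contra fun hpU => hlt.not_ge (hbdry p ⟨hpK, hpU⟩)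
  have hloc : IsLocalMax v p := (hpmax.on_subset hUK).isLocalMax (hU.mem_nhds hpU)
  have := add_nonpos (hloc.laplacian_nonpos (hv₂ p hpU))
    (mul_nonpos_of_nonpos_of_nonneg (hc p hpU) (hM.trans hlt.le))
  linarith [hstrict p hpU]

end Laplacian

theorem lapl_eq_laplacian {n : ℕ} (u : EuclideanSpace ℝ (Fin n) → ℝ) : lapl u = Δ u := by
  rw [InnerProductSpace.laplacian_eq_iteratedFDeriv_orthonormalBasis u
    (EuclideanSpace.basisFun (Fin n) ℝ)]
  ext x
  simp [lapl, EuclideanSpace.basisFun_apply]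

theorem hasDerivAt_exp_quadratic (α Q b c t : ℝ) :
    HasDerivAt (fun t => Real.exp (-(α * (Q + 2 * b * t + c * t ^ 2))))
      (Real.exp (-(α * (Q + 2 * b * t + c * t ^ 2))) * -(α * (2 * b + 2 * c * t))) t := by
  have hq : HasDerivAt (fun t => Q + 2 * b * t + c * t ^ 2) (2 * b + 2 * c * t) t := by
    refine ((((hasDerivAt_id' t).const_mul (2 * b)).const_add Q).fun_add
      ((hasDerivAt_pow 2 t).const_mul c)).congr_deriv ?_
    norm_num
    ring
  exact (hq.const_mul α).fun_neg.exp

theorem deriv_deriv_exp_quadratic (α Q b c : ℝ) :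
    deriv (deriv fun t => Real.exp (-(α * (Q + 2 * b * t + c * t ^ 2)))) 0
      = Real.exp (-(α * Q)) * (4 * α ^ 2 * b ^ 2 - 2 * α * c) := by
  have hlin : HasDerivAt (fun t : ℝ => -(α * (2 * b + 2 * c * t))) (-(α * (2 * c))) 0 := by
    simpa using
      ((((hasDerivAt_id' (0 : ℝ)).const_mul (2 * c)).const_add (2 * b)).const_mul α).fun_neg
  rw [funext fun t => (hasDerivAt_exp_quadratic α Q b c t).deriv,
    ((hasDerivAt_exp_quadratic α Q b c 0).fun_mul hlin).deriv]
  simp only [mul_zero, add_zero, zero_pow two_ne_zero]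
  ring

section Barrier

variable {E : Type*} [NormedAddCommGroup E] [InnerProductSpace ℝ E]

noncomputable def hopfBarrier (α : ℝ) (y x : E) : ℝ := Real.exp (-(α * ‖x - y‖ ^ 2))

theorem contDiff_hopfBarrier (α : ℝ) (y : E) : ContDiff ℝ 2 (hopfBarrier α y) :=
  Real.contDiff_exp.comp
    (contDiff_const.mul ((contDiff_norm_sq ℝ).comp (contDiff_id.sub contDiff_const))).neg

theorem hopfBarrier_add_smul (α : ℝ) (y x e : E) (t : ℝ) :
    hopfBarrier α y (x + t • e)
      = Real.exp (-(α * (‖x - y‖ ^ 2 + 2 * ⟪x - y, e⟫ * t + ‖e‖ ^ 2 * t ^ 2))) := by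
  rw [hopfBarrier, add_sub_right_comm, norm_add_sq_real, real_inner_smul_right, norm_smul,
    mul_pow, Real.norm_eq_abs, sq_abs]
  ring_nf

theorem fderiv_hopfBarrier_apply (α : ℝ) (y x e : E) :
    fderiv ℝ (hopfBarrier α y) x e = hopfBarrier α y x * -(α * (2 * ⟪x - y, e⟫)) := by
  have hline := hasDerivAt_comp_line (p := x) (v := e) (t := 0)
    ((contDiff_hopfBarrier α y).differentiable (by norm_num) _)
  simp_rw [hopfBarrier_add_smul] at hline
  simpa [hopfBarrier] using (hasDerivAt_exp_quadratic α _ _ _ 0).unique hline |>.symm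

theorem fderiv_hopfBarrier_apply_sub (α : ℝ) (y x : E) :
    fderiv ℝ (hopfBarrier α y) x (y - x) = hopfBarrier α y x * (2 * α * ‖x - y‖ ^ 2) := by
  rw [fderiv_hopfBarrier_apply, ← neg_sub x y, inner_neg_right, real_inner_self_eq_norm_sq]
  ring

theorem fderiv_fderiv_hopfBarrier_apply_self (α : ℝ) (y x e : E) :
    fderiv ℝ (fderiv ℝ (hopfBarrier α y)) x e e
      = hopfBarrier α y x * (4 * α ^ 2 * ⟪x - y, e⟫ ^ 2 - 2 * α * ‖e‖ ^ 2) := by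
  rw [← deriv_deriv_comp_line (contDiff_hopfBarrier α y).contDiffAt]
  simp_rw [hopfBarrier_add_smul]
  rw [deriv_deriv_exp_quadratic, hopfBarrier]

variable [FiniteDimensional ℝ E]

theorem laplacian_hopfBarrier (α : ℝ) (y x : E) :
    Δ (hopfBarrier α y) x
      = hopfBarrier α y x * (4 * α ^ 2 * ‖x - y‖ ^ 2 - 2 * α * Module.finrank ℝ E) := by
  set b := stdOrthonormalBasis ℝ E
  simp_rw [laplacian_eq_sum_fderiv_fderiv b, fderiv_fderiv_hopfBarrier_apply_self,
    ← Finset.mul_sum, Finset.sum_sub_distrib, ← Finset.mul_sum, b.sum_sq_inner_left]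
  simp [b.norm_eq_one]

theorem exists_laplacian_hopfBarrier_add_mul_pos (y : E) {r : ℝ} (hr : 0 < r) (L : ℝ) :
    ∃ α > 0, ∀ x, r ≤ ‖x - y‖ → ∀ m, L ≤ m →
      0 < Δ (hopfBarrier α y) x + m * hopfBarrier α y x := by
  set d : ℝ := (Module.finrank ℝ E : ℝ)
  -- `Δw + m w = w (4α²‖x - y‖² - 2αd + m)`, and `α r² ≥ 2d + |L| + 1`, `α ≥ 1` make the bracket
  -- positive.
  set K := 2 * d + |L| + 1
  have hK : 0 < K := by positivity
  refine ⟨K / r ^ 2 + 1, by positivity, fun x hx m hm => ?_⟩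
  set α := K / r ^ 2 + 1
  have hαr : K ≤ α * r ^ 2 := by
    have : K / r ^ 2 * r ^ 2 = K := div_mul_cancel₀ K (by positivity)
    nlinarith
  have hα : 1 ≤ α := by simp only [α]; linarith [div_pos hK (pow_pos hr 2)]
  have hx2 : α ^ 2 * r ^ 2 ≤ α ^ 2 * ‖x - y‖ ^ 2 := by gcongr
  have hkey : 0 < 4 * α ^ 2 * ‖x - y‖ ^ 2 - 2 * α * d + m := by
    have h1 : α * K ≤ α ^ 2 * r ^ 2 := by nlinarith
    have h2 : |L| + 1 ≤ α * (|L| + 1) := le_mul_of_one_le_left (by positivity) hα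
    have h3 : α * K = 2 * α * d + α * (|L| + 1) := by ring
    have h4 : 0 ≤ α ^ 2 * ‖x - y‖ ^ 2 := by positivity
    linarith [neg_abs_le L]
  rw [laplacian_hopfBarrier, mul_comm m, ← mul_add]
  exact mul_pos (Real.exp_pos _) hkey

end Barrier

theorem segment_lineMap_half_subset_closedBall_sdiff {E : Type*} [NormedAddCommGroup E]
    [NormedSpace ℝ E] {y x₀ : E} {ρ : ℝ} (hx₀ : x₀ ∈ sphere y ρ) :
    segment ℝ x₀ (AffineMap.lineMap x₀ y (1 / 2 : ℝ)) ⊆ closedBall y ρ \ ball y (ρ / 2) := by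
  have hρ : 0 ≤ ρ := mem_sphere.1 hx₀ ▸ dist_nonneg
  rw [segment_eq_image_lineMap]
  rintro _ ⟨θ, ⟨hθ₀, hθ₁⟩, rfl⟩
  rw [AffineMap.lineMap_lineMap_right, Set.mem_sdiff, mem_closedBall, mem_ball,
    dist_lineMap_right, mem_sphere.1 hx₀, Real.norm_eq_abs, abs_of_nonneg (by linarith)]
  constructor <;> nlinarith

section Hopf

variable {E : Type*} [NormedAddCommGroup E] [InnerProductSpace ℝ E] [FiniteDimensional ℝ E]

theorem isMaxOn_add_smul_hopfBarrier {u c : E → ℝ} {y x₀ : E} {ρ α δ : ℝ}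
    (hu : ∀ x ∈ closedBall y ρ, ContDiffAt ℝ 2 u x) (hc : ∀ x ∈ ball y ρ, c x ≤ 0)
    (hsub : ∀ x ∈ ball y ρ, 0 ≤ Δ u x + c x * u x) (hx₀ : x₀ ∈ sphere y ρ)
    (hle : ∀ x ∈ closedBall y ρ, u x ≤ u x₀) (hux₀ : 0 ≤ u x₀) (hδ : 0 < δ)
    (hinner : ∀ x ∈ sphere y (ρ / 2), u x + δ ≤ u x₀) (hα : 0 ≤ α)
    (hw : ∀ x ∈ ball y ρ, ρ / 2 ≤ ‖x - y‖ →
      0 < Δ (hopfBarrier α y) x + c x * hopfBarrier α y x) :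
    IsMaxOn (u + δ • hopfBarrier α y) (closedBall y ρ \ ball y (ρ / 2)) x₀ := by
  set w := hopfBarrier α y
  have hwC : ContDiff ℝ 2 w := contDiff_hopfBarrier α y
  have hδw : ContDiff ℝ 2 (δ • w) := hwC.const_smul δ
  have hw_le_one : ∀ x, w x ≤ 1 := fun x =>
    Real.exp_le_one_iff.2 (neg_nonpos.2 (by positivity))
  have hwx₀ : 0 < w x₀ := Real.exp_pos _
  have hUK : ball y ρ \ closedBall y (ρ / 2) ⊆ closedBall y ρ \ ball y (ρ / 2) :=
    sdiff_subset_sdiff ball_subset_closedBall ball_subset_closedBall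
  intro x hx
  refine ((isCompact_closedBall y ρ).diff isOpen_ball).forall_le_of_strictSubsolution
    (isOpen_ball.sdiff isClosed_closedBall) hUK
    (fun p hp => ((hu p hp.1).add hδw.contDiffAt).continuousAt.continuousWithinAt)
    (fun p hp => (hu p (ball_subset_closedBall hp.1)).add hδw.contDiffAt)
    (fun p hp => hc p hp.1) (fun p hp => ?_)
    (add_nonneg hux₀ (mul_nonneg hδ.le hwx₀.le)) (fun p hp => ?_) x hx
  · have hpB : p ∈ ball y ρ := hp.1
    have hpr : ρ / 2 ≤ ‖p - y‖ := by
      rw [← dist_eq_norm]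
      exact (not_le.1 (mt mem_closedBall.2 hp.2)).le
    change 0 < Δ (u + δ • w) p + c p * (u p + δ * w p)
    rw [(hu p (ball_subset_closedBall hpB)).laplacian_add hδw.contDiffAt,
      InnerProductSpace.laplacian_smul δ hwC.contDiffAt]
    have := mul_pos hδ (hw p hpB hpr)
    simp only [smul_eq_mul]
    linarith [hsub p hpB]
  · change u p + δ * w p ≤ u x₀ + δ * w x₀
    obtain ⟨⟨hpB, hpb⟩, hpU⟩ := hp
    rw [mem_closedBall] at hpB
    rw [mem_ball, not_lt] at hpb
    rcases hpB.lt_or_eq with hlt | heq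
    · have hpS : p ∈ sphere y (ρ / 2) := by
        refine mem_sphere.2 (le_antisymm ?_ hpb)
        by_contra! hgt
        exact hpU ⟨mem_ball.2 hlt, fun h => (mem_closedBall.1 h).not_gt hgt⟩
      nlinarith [hinner p hpS, hw_le_one p]
    · have hwp : w p = w x₀ := by
        simp only [w, hopfBarrier, ← dist_eq_norm, heq, mem_sphere.1 hx₀]
      rw [hwp]
      linarith [hle p (mem_closedBall.2 heq.le)]

theorem hopf_lemma {u c : E → ℝ} {y x₀ : E} {ρ : ℝ} (hρ : 0 < ρ)
    (hu : ∀ x ∈ closedBall y ρ, ContDiffAt ℝ 2 u x) (hc : ContinuousOn c (closedBall y ρ))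
    (hc₀ : ∀ x ∈ ball y ρ, c x ≤ 0) (hsub : ∀ x ∈ ball y ρ, 0 ≤ Δ u x + c x * u x)
    (hx₀ : x₀ ∈ sphere y ρ) (hlt : ∀ x ∈ ball y ρ, u x < u x₀) (hux₀ : 0 ≤ u x₀) :
    0 < fderiv ℝ u x₀ (x₀ - y) := by
  have hucont : ContinuousOn u (closedBall y ρ) := fun x hx =>
    (hu x hx).continuousAt.continuousWithinAt
  have hle : ∀ x ∈ closedBall y ρ, u x ≤ u x₀ := by
    rw [← closure_ball y hρ.ne']
    exact le_on_closure (fun x hx => (hlt x hx).le) (by rwa [closure_ball y hρ.ne'])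
      continuousOn_const
  have hS : sphere y (ρ / 2) ⊆ ball y ρ := sphere_subset_ball (by linarith)
  obtain ⟨δ, hδ, hinner⟩ := (isCompact_sphere y (ρ / 2)).exists_forall_le'
    (f := fun x => u x₀ - u x)
    (continuousOn_const.sub (hucont.mono (hS.trans ball_subset_closedBall)))
    (fun x hx => sub_pos.2 (hlt x (hS hx)))
  obtain ⟨L, hL⟩ := (isCompact_closedBall y ρ).bddBelow_image hc
  obtain ⟨α, hα, hw⟩ := exists_laplacian_hopfBarrier_add_mul_pos y (half_pos hρ) L
  have hmax := isMaxOn_add_smul_hopfBarrier hu hc₀ hsub hx₀ hle hux₀ hδ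
    (fun x hx => by linarith [hinner x hx]) hα.le
    (fun x hx hxr => hw x hxr _ (hL ⟨x, ball_subset_closedBall hx, rfl⟩))
  have hdist : dist x₀ y = ρ := hx₀
  set z : E := AffineMap.lineMap x₀ y (1 / 2 : ℝ)
  have hud : DifferentiableAt ℝ u x₀ :=
    (hu x₀ (sphere_subset_closedBall hx₀)).differentiableAt (by norm_num)
  have hwd : DifferentiableAt ℝ (hopfBarrier α y) x₀ :=
    (contDiff_hopfBarrier α y).differentiable (by norm_num) x₀
  have hv := hmax.localize.hasFDerivWithinAt_nonpos
    (hud.add (hwd.const_smul δ)).hasFDerivAt.hasFDerivWithinAt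
    (sub_mem_posTangentConeAt_of_segment_subset (segment_lineMap_half_subset_closedBall_sdiff hx₀))
  have hz : z - x₀ = (1 / 2 : ℝ) • (y - x₀) := AffineMap.lineMap_vsub_left x₀ y _
  rw [fderiv_add hud (hwd.const_smul δ), fderiv_const_smul hwd, hz] at hv
  simp only [add_apply, smul_apply, map_smul, smul_eq_mul, fderiv_hopfBarrier_apply_sub,
    ← dist_eq_norm, hdist] at hv
  rw [← neg_sub y x₀, map_neg]
  have : 0 < δ * (hopfBarrier α y x₀ * (2 * α * ρ ^ 2)) :=
    mul_pos hδ (mul_pos (Real.exp_pos _) (by positivity))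
  linarith

end Hopf

theorem exists_touching_ball_of_notMem_interior {X : Type*} [MetricSpace X] [ProperSpace X]
    {Ω Z : Set X} (hΩ : IsOpen Ω) (hZ : closure Z ∩ Ω ⊆ Z) {z : X} (hzΩ : z ∈ Ω) (hzZ : z ∈ Z)
    (hz : z ∉ interior Z) :
    ∃ y ρ x₀, 0 < ρ ∧ closedBall y ρ ⊆ Ω ∧ Disjoint (ball y ρ) Z ∧ x₀ ∈ sphere y ρ ∧ x₀ ∈ Z := by
  obtain ⟨R, hR, hRΩ⟩ := Metric.isOpen_iff.1 hΩ z hzΩ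
  obtain ⟨y, hyz, hyZ⟩ := not_subset.1 fun h : ball z (R / 4) ⊆ Z =>
    hz (mem_interior.2 ⟨_, h, isOpen_ball, mem_ball_self (by positivity)⟩)
  rw [mem_ball] at hyz
  -- As `dist y z < R / 4`, every ball around `y` of radius `≤ dist y z` lies in
  -- `closedBall z (R / 2)`, where `Z` and `K` agree.
  set K := closure Z ∩ closedBall z (R / 2)
  have hKZ : K ⊆ Z := fun x hx =>
    hZ ⟨hx.1, hRΩ (mem_ball.2 ((mem_closedBall.1 hx.2).trans_lt (by linarith)))⟩
  have hzK : z ∈ K := ⟨subset_closure hzZ, mem_closedBall_self (by positivity)⟩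
  obtain ⟨x₀, hx₀K, hρ⟩ :=
    (isClosed_closure.inter isClosed_closedBall).exists_infDist_eq_dist ⟨z, hzK⟩ y
  set ρ := infDist y K
  have hρR : ρ < R / 4 := (infDist_le_dist_of_mem hzK).trans_lt hyz
  have hball : closedBall y ρ ⊆ closedBall z (R / 2) := fun x hx => by
    rw [mem_closedBall] at hx ⊢
    linarith [dist_triangle x y z]
  refine ⟨y, ρ, x₀, ?_, fun x hx => hRΩ ?_, ?_, by rw [mem_sphere, dist_comm, hρ], hKZ hx₀K⟩
  · rw [hρ, dist_pos]
    exact fun h => hyZ (h ▸ hKZ hx₀K)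
  · exact mem_ball.2 ((mem_closedBall.1 (hball hx)).trans_lt (by linarith))
  · refine Set.disjoint_left.2 fun x hxy hxZ => ?_
    have hxK : x ∈ K := ⟨subset_closure hxZ, hball (ball_subset_closedBall hxy)⟩
    linarith [infDist_le_dist_of_mem (x := y) hxK, mem_ball'.1 hxy]

theorem strong_maximum_principle {E : Type*} [NormedAddCommGroup E] [InnerProductSpace ℝ E]
    [FiniteDimensional ℝ E] {Ω : Set E} (hΩ : IsOpen Ω) (hconn : IsPreconnected Ω)
    {c u : E → ℝ} (hc : ContinuousOn c Ω) (hu : ContDiffOn ℝ 2 u Ω)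
    (hsub : ∀ x ∈ Ω, 0 ≤ Δ u x + c x * u x) (hnonpos : ∀ x ∈ Ω, u x ≤ 0)
    {x₀ : E} (hx₀ : x₀ ∈ Ω) (hux₀ : u x₀ = 0) :
    ∀ x ∈ Ω, u x = 0 := by
  set Z := {x | u x = 0}
  have hZ : closure Z ∩ Ω ⊆ Z := fun x ⟨hxZ, hxΩ⟩ =>
    tendsto_nhds_unique_of_frequently_eq (hu.continuousOn.continuousAt (hΩ.mem_nhds hxΩ))
      tendsto_const_nhds (mem_closure_iff_frequently.1 hxZ)
  have hsub₀ : ∀ x ∈ Ω, 0 ≤ Δ u x + min (c x) 0 * u x := fun x hx => by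
    nlinarith [hsub x hx, hnonpos x hx, min_le_left (c x) 0]
  have hopen : ∀ z ∈ Ω, z ∈ Z → z ∈ interior Z := by
    intro z hzΩ hzZ
    by_contra hz
    obtain ⟨y, ρ, x₁, hρ, hBΩ, hdisj, hx₁, hx₁Z⟩ :=
      exists_touching_ball_of_notMem_interior hΩ hZ hzΩ hzZ hz
    have hux₁ : u x₁ = 0 := hx₁Z
    have hmax : IsLocalMax u x₁ := by
      filter_upwards [hΩ.mem_nhds (hBΩ (sphere_subset_closedBall hx₁))] with x hx
      rw [hux₁]
      exact hnonpos x hx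
    have hneg : ∀ x ∈ ball y ρ, u x < u x₁ := fun x hx => by
      rw [hux₁]
      exact (hnonpos x (hBΩ (ball_subset_closedBall hx))).lt_of_ne
        fun h => Set.disjoint_left.1 hdisj hx h
    have hhopf := hopf_lemma hρ (fun x hx => hu.contDiffAt (hΩ.mem_nhds (hBΩ hx)))
      ((hc.inf continuousOn_const).mono hBΩ) (fun x _ => min_le_right _ _)
      (fun x hx => hsub₀ x (hBΩ (ball_subset_closedBall hx))) hx₁ hneg hux₁.ge
    simp [hmax.fderiv_eq_zero] at hhopf
  have hΩZ : Ω ⊆ interior Z := hconn.subset_of_closure_inter_subset isOpen_interior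
    ⟨x₀, hx₀, hopen x₀ hx₀ hux₀⟩
    fun x ⟨hxZ, hxΩ⟩ => hopen x hxΩ (hZ ⟨closure_mono interior_subset hxZ, hxΩ⟩)
  exact fun x hx => (interior_subset (hΩZ hx) : x ∈ Z)

theorem stmt_3_general (n : ℕ)
    (Ω : Set (EuclideanSpace ℝ (Fin n))) (hΩ : IsOpen Ω) (hconn : IsConnected Ω)
    (c : EuclideanSpace ℝ (Fin n) → ℝ) (hc : ContinuousOn c Ω)
    (u : EuclideanSpace ℝ (Fin n) → ℝ) (hu : ContDiffOn ℝ 2 u Ω)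
    (hineq : ∀ x ∈ Ω, 0 ≤ lapl u x + c x * u x)
    (hnonpos : ∀ x ∈ Ω, u x ≤ 0)
    (x₀ : EuclideanSpace ℝ (Fin n)) (hx₀ : x₀ ∈ Ω) (hux₀ : u x₀ = 0) :
    ∀ x ∈ Ω, u x = 0 := by
  rw [lapl_eq_laplacian] at hineq
  exact strong_maximum_principle hΩ hconn.isPreconnected hc hu hineq hnonpos hx₀ hux₀

/-- Strong Maximum Principle, with a possibly sign-changing zeroth order coefficient. -/
theorem stmt_3 (n : ℕ) (hn : 2 ≤ n)
    (Ω : Set (EuclideanSpace ℝ (Fin n))) (hΩ : IsOpen Ω) (hconn : IsConnected Ω)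
    (c : EuclideanSpace ℝ (Fin n) → ℝ) (hc : ContinuousOn c Ω)
    (u : EuclideanSpace ℝ (Fin n) → ℝ) (hu : ContDiffOn ℝ 2 u Ω)
    (hineq : ∀ x ∈ Ω, 0 ≤ lapl u x + c x * u x)
    (hnonpos : ∀ x ∈ Ω, u x ≤ 0)
    (x₀ : EuclideanSpace ℝ (Fin n)) (hx₀ : x₀ ∈ Ω) (hux₀ : u x₀ = 0) :
    ∀ x ∈ Ω, u x = 0 :=
  stmt_3_general n Ω hΩ hconn c hc u hu hineq hnonpos x₀ hx₀ hux₀
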